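/- arXiv:2605.06749 — 4 statements merged into one kernel-verified Lean document; each statement's English description precedes it below -/
import Mathlib

section
/- Let Ω be a finite set equipped with a probability measure π, let f₀ : Ω → 𝒵 be a map, and let P₀ = (f₀)_#π be the pushforward distribution on 𝒵. Let Ω₁,…,Ω_M be pairwise disjoint subsets of Ω with π(Ω_c) = α_c > 0, set ᾱ = Σ_{c=1}^M α_c, and assume the neutrality condition: for every c and every z ∈ 𝒵, P₀(z) = ℙ[f₀(ω) = z | ω ∈ Ω_c]. Let h_c : 𝒵 → 𝒵 be maps and P_c = (h_c)_#P₀. Let S₁, S₂, … be i.i.d. draws from π, set Z_i = f₀(S_i), let I_{N,c} = {i ≤ N : S_i ∈ Ω_c} with n_{N,c} = |I_{N,c}| and α_{N,c} = n_{N,c}/N, let n_{N,0} = N − Σ_c n_{N,c} and α_{N,0} = 1 − Σ_c α_{N,c}, and define the empirical measures P̂_{N,c} = (h_c)_#(n_{N,c}^{-1} Σ_{i∈I_{N,c}} δ_{Z_i}) when n_{N,c}>0, P̂_{N,0} = n_{N,0}^{-1} Σ_{i: S_i∉∪_cΩ_c} δ_{Z_i} when n_{N,0}>0 (and an arbitrary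 fixed distribution when n_{N,0}=0), and the empirical post-edit mixture P̂_N = α_{N,0} P̂_{N,0} + Σ_{c: α_{N,c}>0} α_{N,c} P̂_{N,c}. Then, almost surely, P̂_N converges pointwise on 𝒵 to P := (1 − ᾱ)P₀ + Σ_{c=1}^M α_c P_c, and for each collective c, α_{N,c} → α_c and P̂_{N,c} → P_c almost surely. -/
open Finset Filter MeasureTheory ProbabilityTheory
open scoped Classical

/-- Pushforward of a mass function `π` on a finite type under `f` :
`(f_#π)(z) = π(f⁻¹{z})`. -/
noncomputable def pushf {Ω Z : Type*} [Fintype Ω] (f : Ω → Z) (π : Ω → ℝ) : Z → ℝ :=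
  fun z => ∑ w ∈ Finset.univ.filter (fun w => f w = z), π w

/-- `sampCount S A N θ` is the number of indices `i < N` whose sampled individual
`S i θ` satisfies `A`. -/
noncomputable def sampCount {Ω Θ : Type*} (S : ℕ → Θ → Ω) (A : Ω → Prop)
    (N : ℕ) (θ : Θ) : ℕ :=
  ((Finset.range N).filter fun i => A (S i θ)).card

/-- `sampEmp S A f N θ z` is the empirical mass at `z` of the images under `f` of the
sampled individuals among the first `N` that satisfy `A` (normalized by their number). -/
noncomputable def sampEmp {Ω Z Θ : Type*} (S : ℕ → Θ → Ω) (A : Ω → Prop) (f : Ω → Z)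
    (N : ℕ) (θ : Θ) (z : Z) : ℝ :=
  (((Finset.range N).filter fun i => A (S i θ) ∧ f (S i θ) = z).card : ℝ)
    / sampCount S A N θ

/-! The count of sampled individuals falling in a set `A ⊆ Ω` is a sum of i.i.d. Bernoulli
indicators, so by the strong law of large numbers its frequency tends to `π(A)` almost surely.
(The `S i` are not assumed measurable, but the outer measures of their fibres add up to `1`,
which forces the fibres to be null measurable, and that is all the strong law needs.)
For `N ≥ 1` the empirical mixture equals the sum of the frequencies of the events
`{S ∉ ⋃ Ω_c, f₀ S = z}` and `{S ∈ Ω_c, h_c (f₀ S) = z}`, and neutrality identifies their limits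
as `(1 - ᾱ) P₀ z` and `α_c P_c z`. Finally `P̂_{N,c}` is a ratio of two frequencies. -/
section Probability

variable {Θ Ω : Type*} [MeasurableSpace Θ] {μ : Measure Θ}

lemma nullMeasurableSet_of_measure_add_measure_compl_le [IsFiniteMeasure μ] {s : Set Θ}
    (h : μ s + μ sᶜ ≤ μ Set.univ) : NullMeasurableSet s μ := by
  set t := toMeasurable μ s
  set u := toMeasurable μ sᶜ
  -- `s` differs from its measurable hull `t` only inside `t ∩ u`, which is null because
  -- `μ t + μ u ≤ μ univ = μ (t ∪ u)`.
  have htu : μ (t ∩ u) = 0 := by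
    have hunion : t ∪ u = Set.univ := Set.eq_univ_of_subset
      (Set.union_subset_union (subset_toMeasurable μ s) (subset_toMeasurable μ sᶜ))
      (Set.union_compl_self s)
    have := measure_union_add_inter (μ := μ) t (measurableSet_toMeasurable μ sᶜ)
    rw [hunion, measure_toMeasurable, measure_toMeasurable] at this
    refine nonpos_iff_eq_zero.1 (ENNReal.le_of_add_le_add_left (measure_ne_top μ Set.univ) ?_)
    rw [this, add_zero]
    exact h
  have hts : NullMeasurableSet (t \ (t \ s)) μ :=
    (measurableSet_toMeasurable μ s).nullMeasurableSet.diff <| .of_null <| measure_mono_null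
      (fun x (hx : x ∈ t \ s) => show x ∈ t ∩ u from ⟨hx.1, subset_toMeasurable μ sᶜ hx.2⟩) htu
  rwa [Set.sdiff_sdiff_cancel_left (subset_toMeasurable μ s)] at hts

lemma aemeasurable_of_sum_measure_preimage_singleton_le [Fintype Ω] [MeasurableSpace Ω]
    [IsFiniteMeasure μ] {f : Θ → Ω} (hf : ∑ w, μ (f ⁻¹' {w}) ≤ μ Set.univ) :
    AEMeasurable f μ := by
  have hfiber : ∀ w, NullMeasurableSet (f ⁻¹' {w}) μ := by
    intro w
    refine nullMeasurableSet_of_measure_add_measure_compl_le (le_trans ?_ hf)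
    rw [← Finset.add_sum_erase _ _ (mem_univ w)]
    gcongr
    calc μ (f ⁻¹' {w})ᶜ = μ (⋃ w' ∈ univ.erase w, f ⁻¹' {w'}) := by
          congr 1; ext θ; simp [eq_comm]
      _ ≤ _ := measure_biUnion_finset_le _ _
  refine NullMeasurable.aemeasurable fun s _ => ?_
  rw [← Set.biUnion_preimage_singleton]
  exact .biUnion s.to_countable fun w _ => hfiber w

theorem tendsto_sampCount_div_ae [MeasurableSpace Ω] [IsFiniteMeasure μ] {S : ℕ → Θ → Ω}
    (hindep : iIndepFun S μ) (hident : ∀ i, IdentDistrib (S i) (S 0) μ μ)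
    {A : Ω → Prop} (hA : MeasurableSet {ω | A ω}) :
    ∀ᵐ θ ∂μ, Tendsto (fun N : ℕ => (sampCount S A N θ : ℝ) / N) atTop
      (nhds (μ.real (S 0 ⁻¹' {ω | A ω}))) := by
  set g : Ω → ℝ := {ω | A ω}.indicator 1
  have hg : Measurable g := measurable_one.indicator hA
  have hS0 : AEMeasurable (S 0) μ := (hident 0).aemeasurable_fst
  have hint : Integrable (g ∘ S 0) μ := by
    refine .of_bound (hg.comp_aemeasurable hS0).aestronglyMeasurable 1 (.of_forall fun θ => ?_)
    simp only [g, Function.comp_apply, Set.indicator_apply]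
    split_ifs <;> simp
  have hmean : μ[g ∘ S 0] = μ.real (S 0 ⁻¹' {ω | A ω}) := by
    rw [Function.comp_def, ← integral_map hS0 hg.aestronglyMeasurable, integral_indicator_one hA,
      measureReal_def, Measure.map_apply_of_aemeasurable hS0 hA, measureReal_def]
  have hlln := strong_law_ae_real (fun i => g ∘ S i) hint
    (fun i j hij => (hindep.indepFun hij).comp hg hg) (fun i => (hident i).comp hg)
  filter_upwards [hlln] with θ hθ
  rw [hmean] at hθ
  refine hθ.congr fun N => ?_
  simp [g, sampCount, Set.indicator_apply, Finset.sum_boole]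

theorem tendsto_sampCount_div_ae_of_law [Fintype Ω] [IsProbabilityMeasure μ] {π : Ω → ℝ}
    (hπnn : ∀ ω, 0 ≤ π ω) (hπsum : ∑ ω, π ω = 1) {S : ℕ → Θ → Ω}
    (hindep : iIndepFun (m := fun _ : ℕ => (⊤ : MeasurableSpace Ω)) S μ)
    (hlaw : ∀ (i : ℕ) (w : Ω), μ {θ | S i θ = w} = ENNReal.ofReal (π w)) (A : Ω → Prop)
    [DecidablePred A] :
    ∀ᵐ θ ∂μ, Tendsto (fun N : ℕ => (sampCount S A N θ : ℝ) / N) atTop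
      (nhds (∑ ω ∈ univ.filter A, π ω)) := by
  let : MeasurableSpace Ω := ⊤
  have hS : ∀ i, AEMeasurable (S i) μ := fun i =>
    aemeasurable_of_sum_measure_preimage_singleton_le <| by
      simp only [Set.preimage, Set.mem_singleton_iff, hlaw, measure_univ]
      rw [← ENNReal.ofReal_sum_of_nonneg fun w _ => hπnn w, hπsum, ENNReal.ofReal_one]
  have hmap : ∀ i w, μ.map (S i) {w} = ENNReal.ofReal (π w) := fun i w => by
    rw [Measure.map_apply_of_aemeasurable (hS i) (measurableSet_singleton w)]
    exact hlaw i w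
  have hident : ∀ i, IdentDistrib (S i) (S 0) μ μ := fun i =>
    ⟨hS i, hS 0, Measure.ext_of_singleton fun w => by rw [hmap, hmap]⟩
  have hlim : μ.real (S 0 ⁻¹' {ω | A ω}) = ∑ ω ∈ univ.filter A, π ω := by
    rw [measureReal_def, ← Measure.map_apply_of_aemeasurable (hS 0) (MeasurableSet.of_discrete),
      show {ω | A ω} = ↑(univ.filter A) by simp, ← sum_measure_singleton]
    simp only [hmap]
    rw [← ENNReal.ofReal_sum_of_nonneg fun w _ => hπnn w,
      ENNReal.toReal_ofReal (sum_nonneg fun w _ => hπnn w)]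
  simpa only [hlim] using tendsto_sampCount_div_ae hindep hident (A := A) .of_discrete

end Probability

section Counting

variable {Ω Θ : Type*} (S : ℕ → Θ → Ω) (N : ℕ) (θ : Θ)

lemma sampCount_mono {A B : Ω → Prop} (hAB : ∀ ω, A ω → B ω) :
    sampCount S A N θ ≤ sampCount S B N θ :=
  card_le_card <| monotone_filter_right _ fun _ _ => hAB _

lemma sampCount_add_sampCount_not (A : Ω → Prop) :
    sampCount S A N θ + sampCount S (fun ω => ¬ A ω) N θ = N := by
  rw [sampCount, sampCount, card_filter_add_card_filter_not, card_range]

open Function in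
lemma sum_sampCount_of_pairwise_disjoint {ι : Type*} [Fintype ι] {Ωc : ι → Finset Ω}
    (hdisj : Pairwise (Disjoint on Ωc)) :
    ∑ c, sampCount S (· ∈ Ωc c) N θ = sampCount S (fun ω => ∃ c, ω ∈ Ωc c) N θ := by
  simp only [sampCount]
  rw [← card_biUnion fun c _ d _ hcd => disjoint_filter_filter' _ _ ?_]
  · congr 1
    ext i
    simp
  · intro p hc hd i hi
    exact Finset.disjoint_left.1 (hdisj hcd) (hc i hi) (hd i hi)

lemma sampEmp_eq_div (A : Ω → Prop) {Z : Type*} (f : Ω → Z) (z : Z) :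
    sampEmp S A f N θ z =
      (sampCount S (fun ω => A ω ∧ f ω = z) N θ : ℝ) / sampCount S A N θ := by
  simp only [sampEmp, sampCount]

lemma sampCount_div_mul_sampEmp (A : Ω → Prop) {Z : Type*} (f : Ω → Z) (z : Z) :
    (sampCount S A N θ : ℝ) / N * sampEmp S A f N θ z =
      (sampCount S (fun ω => A ω ∧ f ω = z) N θ : ℝ) / N := by
  rw [sampEmp_eq_div]
  rcases eq_or_ne (sampCount S A N θ) 0 with hA | hA
  · have : sampCount S (fun ω => A ω ∧ f ω = z) N θ = 0 :=
      Nat.le_zero.1 (hA ▸ sampCount_mono S N θ fun _ h => h.1)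
    simp [hA, this]
  · rw [div_mul_div_comm, mul_comm, mul_div_mul_right _ _ (Nat.cast_ne_zero.2 hA)]

open Function in
lemma one_sub_sum_sampCount_div_mul_ite_eq {ι Z : Type*} [Fintype ι] [DecidableEq Z]
    {Ωc : ι → Finset Ω} (hdisj : Pairwise (Disjoint on Ωc)) (f0 : Ω → Z) (p : ℝ) (z : Z)
    (hN : N ≠ 0) :
    (1 - ∑ c, (sampCount S (· ∈ Ωc c) N θ : ℝ) / N) *
      (if N - ∑ c, sampCount S (· ∈ Ωc c) N θ = 0 then p
       else (((range N).filter fun i => (∀ c, S i θ ∉ Ωc c) ∧ f0 (S i θ) = z).card : ℝ)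
              / (N - ∑ c, sampCount S (· ∈ Ωc c) N θ : ℕ))
      = (sampCount S (fun ω => (∀ c, ω ∉ Ωc c) ∧ f0 ω = z) N θ : ℝ) / N := by
  set T := ∑ c, sampCount S (· ∈ Ωc c) N θ
  set r := sampCount S (fun ω => (∀ c, ω ∉ Ωc c) ∧ f0 ω = z) N θ
  have hT : T + sampCount S (fun ω => ∀ c, ω ∉ Ωc c) N θ = N := by
    simpa [T, sum_sampCount_of_pairwise_disjoint S N θ hdisj] using
      sampCount_add_sampCount_not S N θ (fun ω => ∃ c, ω ∈ Ωc c)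
  have hr : r ≤ N - T := (sampCount_mono S N θ fun _ h => h.1).trans (by omega)
  have hweight : 1 - ∑ c, (sampCount S (· ∈ Ωc c) N θ : ℝ) / N = ((N - T : ℕ) : ℝ) / N := by
    rw [← sum_div, Nat.cast_sub (by omega), sub_div, div_self (Nat.cast_ne_zero.2 hN)]
    push_cast [T]
    rfl
  rw [hweight]
  split_ifs with h0
  · simp [h0, show r = 0 by omega]
  · have hcard :
        ((range N).filter fun i => (∀ c, S i θ ∉ Ωc c) ∧ f0 (S i θ) = z).card = r := by
      simp only [r, sampCount]
      congr
    rw [hcard, div_mul_div_comm, mul_comm, mul_div_mul_right _ _ (Nat.cast_ne_zero.2 h0)]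

end Counting

section Pushforward

variable {Ω Z : Type*} [Fintype Ω] (π : Ω → ℝ) (f0 : Ω → Z)

lemma mul_pushf_pushf_of_neutral [Fintype Z] [DecidableEq Z] {W : Type*} [DecidableEq W]
    (g : Z → W) (Ω₁ : Finset Ω) (a : ℝ)
    (hneutral : ∀ z, a * pushf f0 π z = ∑ ω ∈ Ω₁.filter (fun ω => f0 ω = z), π ω) (w : W) :
    a * pushf g (pushf f0 π) w = ∑ ω ∈ Ω₁.filter (fun ω => g (f0 ω) = w), π ω := by
  rw [pushf, filter_congr_decidable, mul_sum, sum_congr rfl fun z _ => hneutral z]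
  rw [← sum_fiberwise_of_maps_to (s := Ω₁.filter (fun ω => g (f0 ω) = w))
    (t := univ.filter (fun z => g z = w)) (g := f0) (by simp)]
  refine sum_congr rfl fun z hz => sum_congr ?_ fun _ _ => rfl
  rw [filter_filter]
  refine filter_congr fun ω _ => ⟨fun h => ⟨?_, h⟩, fun h => h.2⟩
  rw [h]
  exact (mem_filter.1 hz).2

open Function in
lemma one_sub_sum_mul_pushf_of_neutral [DecidableEq Z] {ι : Type*} [Fintype ι]
    {Ωc : ι → Finset Ω} (hdisj : Pairwise (Disjoint on Ωc)) (α : ι → ℝ)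
    (hneutral : ∀ c z, α c * pushf f0 π z = ∑ ω ∈ (Ωc c).filter (fun ω => f0 ω = z), π ω)
    (z : Z) :
    (1 - ∑ c, α c) * pushf f0 π z
      = ∑ ω ∈ univ.filter (fun ω => (∀ c, ω ∉ Ωc c) ∧ f0 ω = z), π ω := by
  have hsplit := sum_filter_add_sum_filter_not (univ.filter fun ω => f0 ω = z)
    (· ∈ univ.biUnion Ωc) π
  rw [filter_filter, filter_filter] at hsplit
  have hin : univ.filter (fun ω => f0 ω = z ∧ ω ∈ univ.biUnion Ωc)
      = univ.biUnion fun c => (Ωc c).filter fun ω => f0 ω = z := by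
    ext ω; simp [and_comm]
  have hout : univ.filter (fun ω => f0 ω = z ∧ ω ∉ univ.biUnion Ωc)
      = univ.filter (fun ω => (∀ c, ω ∉ Ωc c) ∧ f0 ω = z) := by
    ext ω; simp [and_comm]
  rw [hin, hout, sum_biUnion fun c _ d _ hcd => disjoint_filter_filter (hdisj hcd)] at hsplit
  simp only [sub_mul, one_mul, sum_mul, hneutral]
  rw [pushf, filter_congr_decidable, ← hsplit]
  ring

end Pushforward

theorem stmt_0_general {X Y Ω : Type*} [Fintype X] [Fintype Y]
    [Fintype Ω]
    (π : Ω → ℝ) (hπnn : ∀ ω, 0 ≤ π ω) (hπsum : ∑ ω, π ω = 1)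
    (f0 : Ω → X × Y)
    (M : ℕ)
    (Ωc : Fin M → Finset Ω)
    (hdisj : ∀ c d : Fin M, c ≠ d → Disjoint (Ωc c) (Ωc d))
    (α : Fin M → ℝ) (hα : ∀ c, α c = ∑ ω ∈ Ωc c, π ω) (hαpos : ∀ c, 0 < α c)
    (hneutral : ∀ (c : Fin M) (z : X × Y),
      α c * pushf f0 π z = ∑ ω ∈ (Ωc c).filter (fun ω => f0 ω = z), π ω)
    (h : Fin M → X × Y → X × Y)
    (Pdef : X × Y → ℝ)
    {Θ : Type*} [MeasurableSpace Θ] (μ : Measure Θ) [IsProbabilityMeasure μ]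
    (S : ℕ → Θ → Ω)
    (hindep : iIndepFun (m := fun _ : ℕ => (⊤ : MeasurableSpace Ω)) S μ)
    (hlaw : ∀ (i : ℕ) (w : Ω), μ {θ | S i θ = w} = ENNReal.ofReal (π w)) :
    ∀ᵐ θ ∂μ,
      (∀ z : X × Y,
        Tendsto
          (fun N : ℕ =>
            (1 - ∑ c, (sampCount S (· ∈ Ωc c) N θ : ℝ) / N) *
              (if N - ∑ c, sampCount S (· ∈ Ωc c) N θ = 0 then Pdef z
               else (((Finset.range N).filter fun i =>
                        (∀ c, S i θ ∉ Ωc c) ∧ f0 (S i θ) = z).card : ℝ)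
                      / (N - ∑ c, sampCount S (· ∈ Ωc c) N θ : ℕ))
            + ∑ c ∈ Finset.univ.filter (fun c => 0 < sampCount S (· ∈ Ωc c) N θ),
                ((sampCount S (· ∈ Ωc c) N θ : ℝ) / N) *
                  sampEmp S (· ∈ Ωc c) (fun ω => h c (f0 ω)) N θ z)
          atTop
          (nhds ((1 - ∑ c, α c) * pushf f0 π z
            + ∑ c, α c * pushf (h c) (pushf f0 π) z))) ∧
      ∀ c : Fin M,
        Tendsto (fun N : ℕ => (sampCount S (· ∈ Ωc c) N θ : ℝ) / N) atTop (nhds (α c)) ∧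
        ∀ z : X × Y,
          Tendsto (fun N : ℕ => sampEmp S (· ∈ Ωc c) (fun ω => h c (f0 ω)) N θ z)
            atTop (nhds (pushf (h c) (pushf f0 π) z)) := by
  have hfreq := tendsto_sampCount_div_ae_of_law hπnn hπsum hindep hlaw
  have hmass : ∀ c, ∀ᵐ θ ∂μ, Tendsto (fun N : ℕ => (sampCount S (· ∈ Ωc c) N θ : ℝ) / N) atTop
      (nhds (α c)) := fun c => by
    simpa [hα c, filter_mem_eq_inter] using hfreq (· ∈ Ωc c)
  have hcoll : ∀ c z, ∀ᵐ θ ∂μ, Tendsto (fun N : ℕ =>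
      (sampCount S (fun ω => ω ∈ Ωc c ∧ h c (f0 ω) = z) N θ : ℝ) / N) atTop
      (nhds (α c * pushf (h c) (pushf f0 π) z)) := fun c z => by
    rw [mul_pushf_pushf_of_neutral π f0 (h c) (Ωc c) (α c) (hneutral c)]
    have := hfreq (fun ω => ω ∈ Ωc c ∧ h c (f0 ω) = z)
    rwa [← filter_filter, filter_mem_eq_inter, univ_inter] at this
  have hout : ∀ z, ∀ᵐ θ ∂μ, Tendsto (fun N : ℕ =>
      (sampCount S (fun ω => (∀ c, ω ∉ Ωc c) ∧ f0 ω = z) N θ : ℝ) / N) atTop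
      (nhds ((1 - ∑ c, α c) * pushf f0 π z)) := fun z => by
    rw [one_sub_sum_mul_pushf_of_neutral π f0 hdisj α hneutral]
    -- `convert` only reconciles the `Decidable` instances for `∀ c : Fin M, _`
    convert hfreq _
  filter_upwards [ae_all_iff.2 hmass, ae_all_iff.2 fun c => ae_all_iff.2 (hcoll c),
    ae_all_iff.2 hout] with θ hmassθ hcollθ houtθ
  refine ⟨fun z => ?_, fun c => ⟨hmassθ c, fun z => ?_⟩⟩
  · refine ((houtθ z).add (tendsto_finsetSum _ fun c _ => hcollθ c z)).congr' ?_
    filter_upwards [eventually_ne_atTop 0] with N hN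
    rw [sum_filter_of_ne fun c _ hc => Nat.pos_of_ne_zero fun h0 => hc (by simp [h0])]
    simp_rw [sampCount_div_mul_sampEmp]
    congr 1
    convert (one_sub_sum_sampCount_div_mul_ite_eq S N θ hdisj f0 (Pdef z) z hN).symm
  · have hlim := (hcollθ c z).div (hmassθ c) (hαpos c).ne'
    rw [mul_div_cancel_left₀ _ (hαpos c).ne'] at hlim
    refine hlim.congr' ?_
    filter_upwards [eventually_ne_atTop 0] with N hN
    rw [Pi.div_apply, sampEmp_eq_div,
      div_div_div_cancel_right₀ (Nat.cast_ne_zero.2 hN : (N : ℝ) ≠ 0)]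

/-- with `M` disjoint collectives `Ω_c ⊆ Ω` of masses `α_c > 0`
satisfying the neutrality assumption, strategies `h_c`, and individuals `S₁, S₂, …`
drawn i.i.d. from `π`, the post-edit empirical mixture
`P̂_N = α_{N,0} P̂_{N,0} + Σ_{c : α_{N,c} > 0} α_{N,c} P̂_{N,c}` converges pointwise,
almost surely, to `P = (1 − ᾱ) P₀ + Σ_c α_c P_c` with `P₀ = (f₀)_#π` and
`P_c = (h_c)_# P₀`; moreover `α_{N,c} → α_c` and `P̂_{N,c} → P_c` almost surely. -/
theorem stmt_0 {X Y Ω : Type*} [Fintype X] [Fintype Y] [Nonempty X] [Nonempty Y]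
    [Fintype Ω] [Nonempty Ω]
    (π : Ω → ℝ) (hπnn : ∀ ω, 0 ≤ π ω) (hπsum : ∑ ω, π ω = 1)
    (f0 : Ω → X × Y)
    (M : ℕ) (hM : 1 ≤ M)
    (Ωc : Fin M → Finset Ω)
    (hdisj : ∀ c d : Fin M, c ≠ d → Disjoint (Ωc c) (Ωc d))
    (α : Fin M → ℝ) (hα : ∀ c, α c = ∑ ω ∈ Ωc c, π ω) (hαpos : ∀ c, 0 < α c)
    (hneutral : ∀ (c : Fin M) (z : X × Y),
      α c * pushf f0 π z = ∑ ω ∈ (Ωc c).filter (fun ω => f0 ω = z), π ω)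
    (h : Fin M → X × Y → X × Y)
    (Pdef : X × Y → ℝ) (hPdefnn : ∀ z, 0 ≤ Pdef z) (hPdefsum : ∑ z, Pdef z = 1)
    {Θ : Type*} [MeasurableSpace Θ] (μ : Measure Θ) [IsProbabilityMeasure μ]
    (S : ℕ → Θ → Ω)
    (hindep : iIndepFun (m := fun _ : ℕ => (⊤ : MeasurableSpace Ω)) S μ)
    (hlaw : ∀ (i : ℕ) (w : Ω), μ {θ | S i θ = w} = ENNReal.ofReal (π w)) :
    ∀ᵐ θ ∂μ,
      (∀ z : X × Y,
        Tendsto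
          (fun N : ℕ =>
            (1 - ∑ c, (sampCount S (· ∈ Ωc c) N θ : ℝ) / N) *
              (if N - ∑ c, sampCount S (· ∈ Ωc c) N θ = 0 then Pdef z
               else (((Finset.range N).filter fun i =>
                        (∀ c, S i θ ∉ Ωc c) ∧ f0 (S i θ) = z).card : ℝ)
                      / (N - ∑ c, sampCount S (· ∈ Ωc c) N θ : ℕ))
            + ∑ c ∈ Finset.univ.filter (fun c => 0 < sampCount S (· ∈ Ωc c) N θ),
                ((sampCount S (· ∈ Ωc c) N θ : ℝ) / N) *
                  sampEmp S (· ∈ Ωc c) (fun ω => h c (f0 ω)) N θ z)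
          atTop
          (nhds ((1 - ∑ c, α c) * pushf f0 π z
            + ∑ c, α c * pushf (h c) (pushf f0 π) z))) ∧
      ∀ c : Fin M,
        Tendsto (fun N : ℕ => (sampCount S (· ∈ Ωc c) N θ : ℝ) / N) atTop (nhds (α c)) ∧
        ∀ z : X × Y,
          Tendsto (fun N : ℕ => sampEmp S (· ∈ Ωc c) (fun ω => h c (f0 ω)) N θ z)
            atTop (nhds (pushf (h c) (pushf f0 π) z)) :=
  stmt_0_general π hπnn hπsum f0 M Ωc hdisj α hα hαpos hneutral h Pdef μ S hindep hlaw
end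

section
/- Let P̂ be a probability distribution on 𝒵, let 0 ≤ ε < 1, and let m̂ : 𝒳 → 𝒴 be ε-contamination-suboptimal on a subset 𝒳′ ⊆ 𝒳 under P̂. If x* ∈ 𝒳′, y* ∈ 𝒴, and P̂(x*, y*) > P̂(x*, y′) + ε/(1 − ε) for every y′ ∈ 𝒴 with y′ ≠ y*, then m̂(x*) = y*. -/
open Finset
open scoped Classical

/-- A classifier `m` is `ε`-contamination-suboptimal on `X'` under the
probability mass function `P` on `X × Y`: there is a contamination distribution `R`
such that, with `Q = (1-ε)•P + ε•R`, for every `x ∈ X'` with positive feature marginal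
under `Q`, `m x` maximizes `y ↦ Q (x, y)`. -/
def ContamSuboptimal {X Y : Type*} [Fintype X] [Fintype Y]
    (ε : ℝ) (P : X × Y → ℝ) (X' : Set X) (m : X → Y) : Prop :=
  ∃ R : X × Y → ℝ, (∀ z, 0 ≤ R z) ∧ (∑ z, R z = 1) ∧
    ∀ x ∈ X', 0 < ∑ y, ((1 - ε) * P (x, y) + ε * R (x, y)) →
      ∀ y, (1 - ε) * P (x, y) + ε * R (x, y) ≤ (1 - ε) * P (x, m x) + ε * R (x, m x)

/-- Contamination of mass `ε` moves each value of the mixture by at most `ε` relative to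
`(1 - ε) • P`, so a margin of `ε / (1 - ε)` in `P` survives in the mixture. -/
lemma mix_lt_mix_of_margin {ε p p' r r' : ℝ} (hε0 : 0 ≤ ε) (hε1 : ε < 1)
    (hr : 0 ≤ r) (hr' : r' ≤ 1) (hmargin : p' + ε / (1 - ε) < p) :
    (1 - ε) * p' + ε * r' < (1 - ε) * p + ε * r := by
  have h1ε : 0 < 1 - ε := sub_pos.2 hε1
  calc (1 - ε) * p' + ε * r'
      ≤ (1 - ε) * p' + ε := by nlinarith
    _ = (1 - ε) * (p' + ε / (1 - ε)) := by field_simp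
    _ < (1 - ε) * p := mul_lt_mul_of_pos_left hmargin h1ε
    _ ≤ (1 - ε) * p + ε * r := le_add_of_nonneg_right (mul_nonneg hε0 hr)

lemma le_one_of_sum_eq_one {ι : Type*} [Fintype ι] {R : ι → ℝ} (hRnn : ∀ z, 0 ≤ R z)
    (hRsum : ∑ z, R z = 1) (z : ι) : R z ≤ 1 :=
  hRsum ▸ single_le_sum (fun z _ => hRnn z) (mem_univ z)

theorem stmt_1_general {X Y : Type*} [Fintype X] [Fintype Y]
    (P : X × Y → ℝ) (hPnn : ∀ z, 0 ≤ P z)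
    (ε : ℝ) (hε0 : 0 ≤ ε) (hε1 : ε < 1)
    (X' : Set X) (mhat : X → Y) (hm : ContamSuboptimal ε P X' mhat)
    (xstar : X) (hx : xstar ∈ X') (ystar : Y)
    (hmargin : ∀ y' : Y, y' ≠ ystar → P (xstar, y') + ε / (1 - ε) < P (xstar, ystar)) :
    mhat xstar = ystar := by
  obtain ⟨R, hRnn, hRsum, hopt⟩ := hm
  by_contra hne
  have hQnn : ∀ y, 0 ≤ (1 - ε) * P (xstar, y) + ε * R (xstar, y) := fun y =>
    add_nonneg (mul_nonneg (sub_nonneg.2 hε1.le) (hPnn _)) (mul_nonneg hε0 (hRnn _))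
  have hlt := mix_lt_mix_of_margin hε0 hε1 (hRnn (xstar, ystar))
    (le_one_of_sum_eq_one hRnn hRsum (xstar, mhat xstar)) (hmargin _ hne)
  have hpos : 0 < ∑ y, ((1 - ε) * P (xstar, y) + ε * R (xstar, y)) :=
    sum_pos' (fun y _ => hQnn y) ⟨ystar, mem_univ _, (hQnn _).trans_lt hlt⟩
  exact (hopt xstar hx hpos ystar).not_gt hlt

/-- margin implication for planting: if `m̂` is
`ε`-contamination-suboptimal on `𝒳′` under `P̂`, `x* ∈ 𝒳′`, and
`P̂(x*, y*) > P̂(x*, y′) + ε/(1-ε)` for all `y′ ≠ y*`, then `m̂(x*) = y*`. -/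
theorem stmt_1 {X Y : Type*} [Fintype X] [Fintype Y] [Nonempty X] [Nonempty Y]
    (P : X × Y → ℝ) (hPnn : ∀ z, 0 ≤ P z) (hPsum : ∑ z, P z = 1)
    (ε : ℝ) (hε0 : 0 ≤ ε) (hε1 : ε < 1)
    (X' : Set X) (mhat : X → Y) (hm : ContamSuboptimal ε P X' mhat)
    (xstar : X) (hx : xstar ∈ X') (ystar : Y)
    (hmargin : ∀ y' : Y, y' ≠ ystar → P (xstar, y') + ε / (1 - ε) < P (xstar, ystar)) :
    mhat xstar = ystar :=
  stmt_1_general P hPnn ε hε0 hε1 X' mhat hm xstar hx ystar hmargin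
end

section
/- Let P̂₀, P̂₁, …, P̂_M be probability distributions on 𝒵, let α₀, α₁, …, α_M ≥ 0 with Σ_{d=0}^M α_d = 1, and set P̂ = Σ_{d=0}^M α_d P̂_d. Fix c ∈ {1,…,M}, a subset 𝒳′ ⊆ 𝒳, x* ∈ 𝒳′, and y* ∈ 𝒴, and assume P̂_c(x*, y′) = 0 for every y′ ≠ y*. Define the exact margin M_c(x*) = α_c P̂_c^X(x*) − Σ_{d ∈ {1,…,M}, d ≠ c} α_d max_{y′ ≠ y*}(P̂_d(x*, y′) − P̂_d(x*, y*)) − α₀ max_{y′ ≠ y*}(P̂₀(x*, y′) − P̂₀(x*, y*)). Let 0 ≤ ε < 1 and let m̂ : 𝒳 → 𝒴 be ε-contamination-suboptimal on 𝒳′ under P̂. If M_c(x*) > ε/(1 − ε), then m̂(x*) = y*. -/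
open Finset
open scoped Classical

/-- Feature marginal of a probability mass function on `X × Y`. -/
noncomputable def margX {X Y : Type*} [Fintype X] [Fintype Y] (P : X × Y → ℝ) : X → ℝ :=
  fun x => ∑ y, P (x, y)

/-- `maxOver ystar f` is the maximum of `f y'` over `y' ≠ ystar`
(a supremum over the nonempty finite type `{y // y ≠ ystar}` when `2 ≤ |Y|`). -/
noncomputable def maxOver {Y : Type*} [Fintype Y] (ystar : Y) (f : Y → ℝ) : ℝ :=
  ⨆ y' : {y : Y // y ≠ ystar}, f y'

/-!
Suppose `m̂ x* = y ≠ y*`. The planted component `c` contributes its whole mass at `x*` to the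
gap `P̂(x*, y*) - P̂(x*, y)`, and every other component loses at most `α_d` times its largest
gap, so this mixture gap is at least the margin. On the other hand `y` is optimal under
`(1 - ε) P̂ + ε R`, and `R` moves the comparison by at most `ε`, so the gap is at most
`ε / (1 - ε)`.
-/

lemma le_maxOver {Y : Type*} [Fintype Y] {ystar y : Y} (hy : y ≠ ystar) (f : Y → ℝ) :
    f y ≤ maxOver ystar f :=
  le_ciSup (f := fun y' : {y : Y // y ≠ ystar} => f y') (Set.finite_range _).bddAbove ⟨y, hy⟩

lemma margX_eq_of_eq_zero {X Y : Type*} [Fintype X] [Fintype Y] {P : X × Y → ℝ} {x : X}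
    {ystar : Y} (h : ∀ y, y ≠ ystar → P (x, y) = 0) : margX P x = P (x, ystar) :=
  Finset.sum_eq_single ystar (fun y _ hy => h y hy) (fun h => absurd (mem_univ ystar) h)

lemma ContamSuboptimal.sub_le_div {X Y : Type*} [Fintype X] [Fintype Y] {ε : ℝ}
    {P : X × Y → ℝ} {X' : Set X} {m : X → Y} (hm : ContamSuboptimal ε P X' m)
    (hε0 : 0 ≤ ε) (hε1 : ε < 1) (hP : ∀ z, 0 ≤ P z) {x : X} (hx : x ∈ X') (y : Y) :
    P (x, y) - P (x, m x) ≤ ε / (1 - ε) := by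
  have h1ε : 0 < 1 - ε := by linarith
  have hεdiv : 0 ≤ ε / (1 - ε) := div_nonneg hε0 h1ε.le
  rcases le_or_gt (P (x, y)) 0 with hPy | hPy
  · linarith [hP (x, m x)]
  obtain ⟨R, hR0, hRsum, hopt⟩ := hm
  have hQ_nonneg : ∀ y', 0 ≤ (1 - ε) * P (x, y') + ε * R (x, y') := fun y' =>
    add_nonneg (mul_nonneg h1ε.le (hP _)) (mul_nonneg hε0 (hR0 _))
  have hQx_pos : 0 < ∑ y', ((1 - ε) * P (x, y') + ε * R (x, y')) :=
    lt_of_lt_of_le (add_pos_of_pos_of_nonneg (mul_pos h1ε hPy) (mul_nonneg hε0 (hR0 _)))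
      (Finset.single_le_sum (fun y' _ => hQ_nonneg y') (mem_univ y))
  have hRm : R (x, m x) ≤ 1 :=
    hRsum ▸ Finset.single_le_sum (fun z _ => hR0 z) (mem_univ (x, m x))
  have hopt_y := hopt x hx hQx_pos y
  rw [le_div_iff₀ h1ε]
  nlinarith [hR0 (x, y)]

lemma margin_le_sub {ι X Y : Type*} [Fintype ι] [DecidableEq ι] [Fintype X] [Fintype Y]
    (P : ι → X × Y → ℝ) (α : ι → ℝ) (hα : ∀ d, 0 ≤ α d) {d₀ c : ι} (hc : c ≠ d₀)
    {x : X} {ystar y : Y} (hy : y ≠ ystar) (hplant : ∀ y', y' ≠ ystar → P c (x, y') = 0) :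
    α c * margX (P c) x
        - (∑ d ∈ (univ.erase d₀).erase c,
            α d * maxOver ystar (fun y'' => P d (x, y'') - P d (x, ystar)))
        - α d₀ * maxOver ystar (fun y'' => P d₀ (x, y'') - P d₀ (x, ystar))
      ≤ ∑ d, α d * P d (x, ystar) - ∑ d, α d * P d (x, y) := by
  set gap : ι → ℝ := fun d => α d * (P d (x, ystar) - P d (x, y))
  have hgap_c : gap c = α c * margX (P c) x := by
    simp only [gap, margX_eq_of_eq_zero hplant, hplant y hy, sub_zero]
  have hgap_ge : ∀ d, -(α d * maxOver ystar (fun y'' => P d (x, y'') - P d (x, ystar)))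
      ≤ gap d := fun d => by
    have := mul_le_mul_of_nonneg_left
      (le_maxOver hy (fun y'' => P d (x, y'') - P d (x, ystar))) (hα d)
    simp only [gap]
    linarith
  have hsplit : ∑ d, gap d = gap d₀ + (gap c + ∑ d ∈ (univ.erase d₀).erase c, gap d) := by
    rw [add_sum_erase _ gap (mem_erase.2 ⟨hc, mem_univ c⟩), add_sum_erase _ gap (mem_univ d₀)]
  have hrest := Finset.sum_le_sum fun d (_ : d ∈ (univ.erase d₀).erase c) => hgap_ge d
  rw [sum_neg_distrib] at hrest
  rw [← sum_sub_distrib]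
  simp only [← mul_sub]
  change _ ≤ ∑ d, gap d
  linarith [hgap_ge d₀]

theorem stmt_6_general {X Y : Type*} [Fintype X] [Fintype Y]
    (M : ℕ)
    (P : Fin (M + 1) → X × Y → ℝ)
    (hPnn : ∀ d z, 0 ≤ P d z)
    (α : Fin (M + 1) → ℝ) (hα : ∀ d, 0 ≤ α d)
    (c : Fin (M + 1)) (hc : c ≠ 0)
    (X' : Set X) (xstar : X) (hx : xstar ∈ X') (ystar : Y)
    (hplant : ∀ y' : Y, y' ≠ ystar → P c (xstar, y') = 0)
    (ε : ℝ) (hε0 : 0 ≤ ε) (hε1 : ε < 1)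
    (mhat : X → Y)
    (hm : ContamSuboptimal ε (fun z => ∑ d, α d * P d z) X' mhat)
    (hmargin :
      ε / (1 - ε) <
        α c * margX (P c) xstar
          - (∑ d ∈ (Finset.univ.erase 0).erase c,
              α d * maxOver ystar (fun y'' => P d (xstar, y'') - P d (xstar, ystar)))
          - α 0 * maxOver ystar (fun y'' => P 0 (xstar, y'') - P 0 (xstar, ystar))) :
    mhat xstar = ystar := by
  by_contra hne
  have hmix_nonneg : ∀ z, 0 ≤ ∑ d, α d * P d z := fun z =>
    sum_nonneg fun d _ => mul_nonneg (hα d) (hPnn d z)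
  have hgap_lower := margin_le_sub P α hα hc hne hplant
  have hgap_upper := hm.sub_le_div hε0 hε1 hmix_nonneg hx ystar
  linarith

/-- if the exact empirical margin of collective `c` at `x* ∈ 𝒳′`
exceeds `ε/(1−ε)` and `m̂` is `ε`-contamination-suboptimal on `𝒳′` under the mixture
`P̂ = Σ_d α_d P̂_d`, then `m̂(x*) = y*`. -/
theorem stmt_6 {X Y : Type*} [Fintype X] [Fintype Y] [Nonempty X]
    (hY : 2 ≤ Fintype.card Y)
    (M : ℕ) (hM : 1 ≤ M)
    (P : Fin (M + 1) → X × Y → ℝ)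
    (hPnn : ∀ d z, 0 ≤ P d z) (hPsum : ∀ d, ∑ z, P d z = 1)
    (α : Fin (M + 1) → ℝ) (hα : ∀ d, 0 ≤ α d) (hαsum : ∑ d, α d = 1)
    (c : Fin (M + 1)) (hc : c ≠ 0)
    (X' : Set X) (xstar : X) (hx : xstar ∈ X') (ystar : Y)
    (hplant : ∀ y' : Y, y' ≠ ystar → P c (xstar, y') = 0)
    (ε : ℝ) (hε0 : 0 ≤ ε) (hε1 : ε < 1)
    (mhat : X → Y)
    (hm : ContamSuboptimal ε (fun z => ∑ d, α d * P d z) X' mhat)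
    (hmargin :
      ε / (1 - ε) <
        α c * margX (P c) xstar
          - (∑ d ∈ (Finset.univ.erase 0).erase c,
              α d * maxOver ystar (fun y'' => P d (xstar, y'') - P d (xstar, ystar)))
          - α 0 * maxOver ystar (fun y'' => P 0 (xstar, y'') - P 0 (xstar, ystar))) :
    mhat xstar = ystar :=
  stmt_6_general M P hPnn α hα c hc X' xstar hx ystar hplant ε hε0 hε1 mhat hm hmargin
end

section
/- Let P̂₀, P̂₁, …, P̂_M be probability distributions on 𝒵, let α₀, α₁, …, α_M ≥ 0 with Σ_{d=0}^M α_d = 1, and set P̂ = Σ_{d=0}^M α_d P̂_d. Fix c ∈ {1,…,M}, a subset 𝒳′ ⊆ 𝒳, x* ∈ 𝒳′, y* ∈ 𝒴, and a label y′ ∈ 𝒴 with y′ ≠ y*, and assume P̂_c(x*, y) = 0 for every y ≠ y′. Define the exact unplanting margin M_c^{unp}(x*) = α_c P̂_c^X(x*) − Σ_{d ∈ {1,…,M}, d ≠ c} α_d (P̂_d(x*, y*) − P̂_d(x*, y′)) − α₀ (P̂₀(x*, y*) − P̂₀(x*, y′)). Let 0 ≤ ε < 1 and let m̂ : 𝒳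 → 𝒴 be ε-contamination-suboptimal on 𝒳′ under P̂. If M_c^{unp}(x*) > ε/(1 − ε), then m̂(x*) ≠ y*. -/
/-!
Contaminating `P̂` by `ε R` shifts `(1 - ε) P̂(x, y) + ε R(x, y)` relative to the same quantity at
`y₀` by at most `ε`, so a lead of `y` over `y₀` under `P̂` larger than `ε / (1 - ε)` survives every
contamination and rules out `m̂ x = y₀`. Since `P̂_c(x*, ·)` is concentrated on `y'`, the lead of `y'`
over `y*` under the mixture is exactly the unplanting margin.
-/

open Finset
open scoped Classical

theorem sub_le_one_of_nonneg_of_sum_eq_one {Z : Type*} [Fintype Z] {R : Z → ℝ}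
    (hR : ∀ z, 0 ≤ R z) (hRsum : ∑ z, R z = 1) (z₁ z₂ : Z) : R z₁ - R z₂ ≤ 1 := by
  have hle : R z₁ ≤ ∑ z, R z := single_le_sum (fun z _ => hR z) (mem_univ z₁)
  linarith [hR z₂]

theorem ContamSuboptimal.apply_ne {X Y : Type*} [Fintype X] [Fintype Y]
    {ε : ℝ} {P : X × Y → ℝ} {X' : Set X} {m : X → Y}
    (hm : ContamSuboptimal ε P X' m) (hP : ∀ z, 0 ≤ P z) (hε0 : 0 ≤ ε) (hε1 : ε < 1)
    {x : X} (hx : x ∈ X') {y y₀ : Y} (hgap : ε / (1 - ε) < P (x, y) - P (x, y₀)) :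
    m x ≠ y₀ := by
  rintro rfl
  obtain ⟨R, hR, hRsum, hopt⟩ := hm
  set Q : Y → ℝ := fun y => (1 - ε) * P (x, y) + ε * R (x, y)
  have hQ_nonneg : ∀ y, 0 ≤ Q y := fun y =>
    add_nonneg (mul_nonneg (by linarith) (hP _)) (mul_nonneg hε0 (hR _))
  have hQ_lt : Q (m x) < Q y := by
    have hgap' : ε < (1 - ε) * (P (x, y) - P (x, m x)) := by
      rwa [div_lt_iff₀' (by linarith)] at hgap
    have hRdiff : ε * (R (x, m x) - R (x, y)) ≤ ε :=
      mul_le_of_le_one_right hε0 (sub_le_one_of_nonneg_of_sum_eq_one hR hRsum _ _)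
    simp only [Q]
    nlinarith
  have hQ_pos : 0 < ∑ y, Q y :=
    (hQ_nonneg _).trans_lt (hQ_lt.trans_le (single_le_sum (fun y _ => hQ_nonneg y) (mem_univ y)))
  exact (hopt x hx hQ_pos y).not_gt hQ_lt

theorem sum_eq_add_add_sum_erase_erase {ι M : Type*} [Fintype ι] [DecidableEq ι]
    [AddCommMonoid M] (f : ι → M) {o c : ι} (hc : c ≠ o) :
    ∑ i, f i = f o + f c + ∑ i ∈ (univ.erase o).erase c, f i := by
  rw [← add_sum_erase _ _ (mem_univ o), ← add_sum_erase _ _ (mem_erase.mpr ⟨hc, mem_univ c⟩),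
    add_assoc]

theorem margX_eq_of_forall_ne_eq_zero {X Y : Type*} [Fintype X] [Fintype Y]
    {P : X × Y → ℝ} {x : X} {y' : Y} (hconc : ∀ y, y ≠ y' → P (x, y) = 0) :
    margX P x = P (x, y') :=
  sum_eq_single y' (fun y _ hy => hconc y hy) fun h => (h (mem_univ y')).elim

theorem mixture_sub_eq_unplanting_margin {X Y ι : Type*} [Fintype X] [Fintype Y] [Fintype ι]
    [DecidableEq ι] (P : ι → X × Y → ℝ) (α : ι → ℝ) {o c : ι} (hc : c ≠ o) {x : X}
    {ystar y' : Y} (hy' : y' ≠ ystar) (hconc : ∀ y, y ≠ y' → P c (x, y) = 0) :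
    ∑ d, α d * P d (x, y') - ∑ d, α d * P d (x, ystar) =
      α c * margX (P c) x
        - ∑ d ∈ (univ.erase o).erase c, α d * (P d (x, ystar) - P d (x, y'))
        - α o * (P o (x, ystar) - P o (x, y')) := by
  rw [← sum_sub_distrib, sum_eq_add_add_sum_erase_erase _ hc, margX_eq_of_forall_ne_eq_zero hconc,
    hconc ystar hy'.symm]
  simp only [mul_sub, sum_sub_distrib]
  ring

theorem stmt_12_general {X Y : Type*} [Fintype X] [Fintype Y]
    (M : ℕ)
    (P : Fin (M + 1) → X × Y → ℝ)
    (hPnn : ∀ d z, 0 ≤ P d z)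
    (α : Fin (M + 1) → ℝ) (hα : ∀ d, 0 ≤ α d)
    (c : Fin (M + 1)) (hc : c ≠ 0)
    (X' : Set X) (xstar : X) (hx : xstar ∈ X') (ystar : Y)
    (y' : Y) (hy' : y' ≠ ystar)
    (hconc : ∀ y : Y, y ≠ y' → P c (xstar, y) = 0)
    (ε : ℝ) (hε0 : 0 ≤ ε) (hε1 : ε < 1)
    (mhat : X → Y)
    (hm : ContamSuboptimal ε (fun z => ∑ d, α d * P d z) X' mhat)
    (hmargin :
      ε / (1 - ε) <
        α c * margX (P c) xstar
          - (∑ d ∈ (Finset.univ.erase 0).erase c,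
              α d * (P d (xstar, ystar) - P d (xstar, y')))
          - α 0 * (P 0 (xstar, ystar) - P 0 (xstar, y'))) :
    mhat xstar ≠ ystar := by
  refine hm.apply_ne (fun z => sum_nonneg fun d _ => mul_nonneg (hα d) (hPnn d z)) hε0 hε1 hx
    (y := y') ?_
  rwa [mixture_sub_eq_unplanting_margin P α hc hy' hconc]

/-- if the exact unplanting margin of collective `c` at `x* ∈ 𝒳′`
exceeds `ε/(1−ε)` and `m̂` is `ε`-contamination-suboptimal on `𝒳′` under the mixture
`P̂ = Σ_d α_d P̂_d`, then `m̂(x*) ≠ y*`. -/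
theorem stmt_12 {X Y : Type*} [Fintype X] [Fintype Y] [Nonempty X]
    (hY : 2 ≤ Fintype.card Y)
    (M : ℕ) (hM : 1 ≤ M)
    (P : Fin (M + 1) → X × Y → ℝ)
    (hPnn : ∀ d z, 0 ≤ P d z) (hPsum : ∀ d, ∑ z, P d z = 1)
    (α : Fin (M + 1) → ℝ) (hα : ∀ d, 0 ≤ α d) (hαsum : ∑ d, α d = 1)
    (c : Fin (M + 1)) (hc : c ≠ 0)
    (X' : Set X) (xstar : X) (hx : xstar ∈ X') (ystar : Y)
    (y' : Y) (hy' : y' ≠ ystar)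
    (hconc : ∀ y : Y, y ≠ y' → P c (xstar, y) = 0)
    (ε : ℝ) (hε0 : 0 ≤ ε) (hε1 : ε < 1)
    (mhat : X → Y)
    (hm : ContamSuboptimal ε (fun z => ∑ d, α d * P d z) X' mhat)
    (hmargin :
      ε / (1 - ε) <
        α c * margX (P c) xstar
          - (∑ d ∈ (Finset.univ.erase 0).erase c,
              α d * (P d (xstar, ystar) - P d (xstar, y')))
          - α 0 * (P 0 (xstar, ystar) - P 0 (xstar, y'))) :
    mhat xstar ≠ ystar :=
  stmt_12_general M P hPnn α hα c hc X' xstar hx ystar y' hy' hconc ε hε0 hε1 mhat hm hmargin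
end
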